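/- arXiv:math/0211130 — 2 statements merged into one kernel-verified Lean document; each statement's English description precedes it below -/
import Mathlib

section
/- The homomorphism φ : FreeGroup (Fin 3) → A_L sending the free generators g₀, g₁, g₂ to a, x, e is injective, and its range is exactly the kernel of the length homomorphism ℓ : A_L → ℤ. In particular, Γ_L := ker ℓ is a free group of rank 3, freely generated by a = ū₂⁻¹ū₁, x = ū₂⁻¹ū₃ and e = ū₃⁻¹ū₄. -/
/-- The relator set of the right-angled Artin group of a simple graph `G`:
commutators of pairs of adjacent vertices. -/
def raagRels {V : Type*} (G : SimpleGraph V) : Set (FreeGroup V) :=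
  {r | ∃ u v : V, G.Adj u v ∧
    r = FreeGroup.of u * FreeGroup.of v * (FreeGroup.of u)⁻¹ * (FreeGroup.of v)⁻¹}

/-- The right-angled Artin group of a simple graph `G`. -/
abbrev RAAG {V : Type*} (G : SimpleGraph V) : Type _ :=
  PresentedGroup (raagRels G)

/-- The image `v̄` of a vertex (generator) `v` in the right-angled Artin group. -/
def RAAG.gen {V : Type*} (G : SimpleGraph V) (v : V) : RAAG G :=
  PresentedGroup.of (rels := raagRels G) v

/-- The path graph `L` on the four vertices `u₁ = 0, u₂ = 1, u₃ = 2, u₄ = 3`,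
with edges `{u₁,u₂}, {u₂,u₃}, {u₃,u₄}`. -/
abbrev L : SimpleGraph (Fin 4) := SimpleGraph.pathGraph 4

/-- The right-angled Artin group
`A_L = ⟨u₁,u₂,u₃,u₄ ∣ [u₁,u₂] = [u₂,u₃] = [u₃,u₄] = 1⟩`. -/
abbrev A_L : Type _ := RAAG L

/-- `a = ū₂⁻¹ū₁`. -/
def elt_a : A_L := (RAAG.gen L 1)⁻¹ * RAAG.gen L 0

/-- `x = ū₂⁻¹ū₃`. -/
def elt_x : A_L := (RAAG.gen L 1)⁻¹ * RAAG.gen L 2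

/-- `e = ū₃⁻¹ū₄`. -/
def elt_e : A_L := (RAAG.gen L 2)⁻¹ * RAAG.gen L 3

/-- The homomorphism `φ : FreeGroup (Fin 3) →* A_L` with `φ g₀ = a`, `φ g₁ = x`,
`φ g₂ = e`. -/
def phi : FreeGroup (Fin 3) →* A_L := FreeGroup.lift ![elt_a, elt_x, elt_e]

/-!
Put `t = ū₂`. Since `ū₁ = a t`, `ū₃ = x t` and `ū₄ = e x t`, the group `A_L` is generated by
`a, x, e, t`, and the three defining commutators become `t a t⁻¹ = a`, `t x t⁻¹ = x` and
`t e t⁻¹ = x⁻¹ e x`. These are exactly the relations of `F₃ ⋊_θ ℤ`, where `θ` fixes `g₀, g₁`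
and sends `g₂ ↦ g₁⁻¹ g₂ g₁`. So `A_L ≅ F₃ ⋊_θ ℤ`, with `φ` corresponding to the inclusion of
`F₃` and `ℓ` to the projection onto `ℤ`, whose kernel is `F₃`.
-/

namespace RAAG

variable {V : Type*} {G : SimpleGraph V} {H : Type*} [Group H]

theorem gen_commute {u v : V} (h : G.Adj u v) : Commute (gen G u) (gen G v) :=
  commutatorElement_eq_one_iff_commute.mp <| by
    simpa [commutatorElement_def, gen, PresentedGroup.of] using
      PresentedGroup.one_of_mem (rels := raagRels G) ⟨u, v, h, rfl⟩

def lift (f : V → H) (hf : ∀ u v, G.Adj u v → Commute (f u) (f v)) : RAAG G →* H :=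
  PresentedGroup.toGroup <| by
    rintro _ ⟨u, v, huv, rfl⟩
    simpa [commutatorElement_def] using commutatorElement_eq_one_iff_commute.mpr (hf u v huv)

@[simp]
theorem lift_gen (f : V → H) (hf : ∀ u v, G.Adj u v → Commute (f u) (f v)) (v : V) :
    lift f hf (gen G v) = f v :=
  PresentedGroup.toGroup.of _

theorem hom_ext {φ ψ : RAAG G →* H} (h : ∀ v, φ (gen G v) = ψ (gen G v)) : φ = ψ :=
  PresentedGroup.ext h

end RAAG

theorem commute_of_pathGraph_adj {M : Type*} [Monoid M] {n : ℕ} {f : Fin n → M}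
    (hf : ∀ (i : ℕ) (hi : i + 1 < n), Commute (f ⟨i, by omega⟩) (f ⟨i + 1, hi⟩))
    {u v : Fin n} (h : (SimpleGraph.pathGraph n).Adj u v) : Commute (f u) (f v) := by
  obtain ⟨i, hi⟩ := u
  obtain ⟨j, hj⟩ := v
  rcases SimpleGraph.pathGraph_adj.mp h with rfl | rfl
  exacts [hf i hj, (hf j hi).symm]

theorem MonoidHom.map_zpow_apply_eq_conj_zpow {N G : Type*} [Group N] [Group G] (f : N →* G)
    {θ : MulAut N} {t : G} (h : ∀ w, f (θ w) = t * f w * t⁻¹) (n : ℤ) (w : N) :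
    f ((θ ^ n) w) = t ^ n * f w * (t ^ n)⁻¹ := by
  induction n using Int.induction_on generalizing w with
  | zero => simp
  | succ k ih => rw [zpow_add_one, MulAut.mul_apply, ih, h]; group
  | pred k ih =>
    have h' : f (θ⁻¹ w) = t⁻¹ * f w * t := by
      conv_rhs => rw [← MulAut.apply_inv_self _ θ w, h]
      group
    rw [zpow_sub_one, MulAut.mul_apply, ih, h']; group

namespace SemidirectProduct

variable {N K G : Type*} [Group N] [Group K] [Group G] {ρ : K →* MulAut N}

theorem range_eq_ker_rightHom_comp {φ : N →* G} {ψ : G →* N ⋊[ρ] K} {χ : N ⋊[ρ] K →* G}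
    (hχψ : Function.LeftInverse χ ψ) (hψφ : ψ.comp φ = inl) :
    φ.range = (rightHom.comp ψ).ker := by
  rw [← MonoidHom.comap_ker, ← range_inl_eq_ker_rightHom, ← hψφ, MonoidHom.range_comp,
    Subgroup.comap_map_eq_self_of_injective hχψ.injective]

end SemidirectProduct

namespace A_L

open RAAG SemidirectProduct

def theta : MulAut (FreeGroup (Fin 3)) :=
  MonoidHom.toMulEquiv
    (FreeGroup.lift ![.of 0, .of 1, (.of 1)⁻¹ * .of 2 * .of 1])
    (FreeGroup.lift ![.of 0, .of 1, .of 1 * .of 2 * (.of 1)⁻¹])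
    (by ext i; fin_cases i <;> simp [mul_assoc])
    (by ext i; fin_cases i <;> simp [mul_assoc])

@[simp] theorem theta_of_zero : theta (.of 0) = .of 0 := by simp [theta]
@[simp] theorem theta_of_one : theta (.of 1) = .of 1 := by simp [theta]
@[simp] theorem theta_of_two : theta (.of 2) = (.of 1)⁻¹ * .of 2 * .of 1 := by simp [theta]
@[simp] theorem theta_symm_of_zero : theta.symm (.of 0) = .of 0 := by simp [theta]
@[simp] theorem theta_symm_of_one : theta.symm (.of 1) = .of 1 := by simp [theta]
@[simp] theorem theta_symm_of_two : theta.symm (.of 2) = .of 1 * .of 2 * (.of 1)⁻¹ := by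
  simp [theta]

abbrev FreeByCyclic : Type :=
  FreeGroup (Fin 3) ⋊[zpowersHom (MulAut (FreeGroup (Fin 3))) theta] Multiplicative ℤ

def stableLetter : FreeByCyclic := inr (.ofAdd 1)

def genImage (i : Fin 4) : FreeByCyclic :=
  inl (![.of 0, 1, .of 1, .of 2 * .of 1] i) * stableLetter

theorem commute_genImage (i : ℕ) (hi : i + 1 < 4) :
    Commute (genImage ⟨i, by omega⟩) (genImage ⟨i + 1, hi⟩) := by
  have : i < 3 := by omega
  interval_cases i <;> ext <;> simp [genImage, stableLetter, mul_assoc]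

def toFreeByCyclic : A_L →* FreeByCyclic :=
  RAAG.lift genImage fun _ _ => commute_of_pathGraph_adj commute_genImage

@[simp]
theorem toFreeByCyclic_gen (i : Fin 4) : toFreeByCyclic (gen L i) = genImage i :=
  RAAG.lift_gen _ _ i

theorem commute_gen_one_elt_a : Commute (gen L 1) elt_a :=
  (Commute.refl _).inv_right.mul_right (gen_commute (by simp [SimpleGraph.pathGraph_adj]))

theorem commute_gen_one_elt_x : Commute (gen L 1) elt_x :=
  (Commute.refl _).inv_right.mul_right (gen_commute (by simp [SimpleGraph.pathGraph_adj]))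

theorem commute_gen_two_elt_e : Commute (gen L 2) elt_e :=
  (Commute.refl _).inv_right.mul_right (gen_commute (by simp [SimpleGraph.pathGraph_adj]))

theorem elt_a_mul_gen_one : elt_a * gen L 1 = gen L 0 :=
  (gen_commute (by simp [SimpleGraph.pathGraph_adj])).inv_mul_cancel

theorem elt_x_mul_gen_one : elt_x * gen L 1 = gen L 2 :=
  (gen_commute (by simp [SimpleGraph.pathGraph_adj])).inv_mul_cancel

theorem elt_e_mul_gen_two : elt_e * gen L 2 = gen L 3 :=
  (gen_commute (by simp [SimpleGraph.pathGraph_adj])).inv_mul_cancel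

theorem gen_one_conj_elt_e : gen L 1 * elt_e * (gen L 1)⁻¹ = elt_x⁻¹ * elt_e * elt_x := by
  have h21 : Commute (gen L 2) (gen L 1) := gen_commute (by simp [SimpleGraph.pathGraph_adj])
  have hconj : Commute (gen L 2) (gen L 1 * elt_e * (gen L 1)⁻¹) :=
    (h21.mul_right commute_gen_two_elt_e).mul_right h21.inv_right
  rw [← hconj.inv_mul_cancel, elt_x]
  group

theorem phi_theta (w : FreeGroup (Fin 3)) : phi (theta w) = gen L 1 * phi w * (gen L 1)⁻¹ := by
  suffices phi.comp theta.toMonoidHom = (MulAut.conj (gen L 1)).toMonoidHom.comp phi from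
    DFunLike.congr_fun this w
  refine FreeGroup.ext_hom _ _ fun i => ?_
  fin_cases i
  · simp [phi, commute_gen_one_elt_a.eq]
  · simp [phi, commute_gen_one_elt_x.eq]
  · simp [phi, gen_one_conj_elt_e]

def ofFreeByCyclic : FreeByCyclic →* A_L :=
  SemidirectProduct.lift phi (zpowersHom A_L (gen L 1)) fun n => MonoidHom.ext fun w => by
    simp only [MonoidHom.comp_apply, MulEquiv.coe_toMonoidHom, zpowersHom_apply,
      MulAut.conj_apply]
    exact phi.map_zpow_apply_eq_conj_zpow phi_theta n.toAdd w

theorem leftInverse_ofFreeByCyclic : Function.LeftInverse ofFreeByCyclic toFreeByCyclic := by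
  suffices ofFreeByCyclic.comp toFreeByCyclic = MonoidHom.id A_L from DFunLike.congr_fun this
  refine RAAG.hom_ext fun i => ?_
  fin_cases i <;> simp [ofFreeByCyclic, genImage, stableLetter, phi, mul_assoc,
    elt_a_mul_gen_one, elt_x_mul_gen_one, elt_e_mul_gen_two]

theorem toFreeByCyclic_comp_phi : toFreeByCyclic.comp phi = inl := by
  refine FreeGroup.ext_hom _ _ fun i => ?_
  fin_cases i <;> ext <;> simp [phi, elt_a, elt_x, elt_e, genImage, stableLetter, mul_assoc]

theorem rightHom_comp_toFreeByCyclic (ℓ : A_L →* Multiplicative ℤ)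
    (hℓ : ∀ i : Fin 4, ℓ (gen L i) = Multiplicative.ofAdd 1) :
    rightHom.comp toFreeByCyclic = ℓ :=
  RAAG.hom_ext fun i => by simp [hℓ, genImage, stableLetter]

end A_L

theorem stmt_5 (ℓ : A_L →* Multiplicative ℤ)
    (hℓ : ∀ i : Fin 4, ℓ (RAAG.gen L i) = Multiplicative.ofAdd 1) :
    Function.Injective phi ∧ phi.range = ℓ.ker := by
  constructor
  · refine Function.Injective.of_comp (f := A_L.toFreeByCyclic) ?_
    rw [← MonoidHom.coe_comp, A_L.toFreeByCyclic_comp_phi]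
    exact SemidirectProduct.inl_injective
  · rw [← A_L.rightHom_comp_toFreeByCyclic ℓ hℓ]
    exact SemidirectProduct.range_eq_ker_rightHom_comp A_L.leftInverse_ofFreeByCyclic
      A_L.toFreeByCyclic_comp_phi
end

section
/- There is no constant C ∈ ℝ such that for all w ∈ FreeGroup (Fin 3) one has FreeGroup.norm w ≤ C · |φ(w)|_S + C, where S = {ū₁, ū₂, ū₃, ū₄} and |·|_S is word length in A_L with respect to S. (That is, the free subgroup Γ_L = φ(FreeGroup (Fin 3)) is not quasi-isometrically embedded in A_L; it is at least quadratically distorted.) -/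
/-- The standard generating set `S = {ū₁, ū₂, ū₃, ū₄}` of `A_L`. -/
def genSet : Set A_L := {RAAG.gen L 0, RAAG.gen L 1, RAAG.gen L 2, RAAG.gen L 3}

/-- The word length of `g ∈ A_L` with respect to `S`: the least `n` such that `g` is
a product of `n` elements of `S ∪ S⁻¹`. -/
noncomputable def wordLength (g : A_L) : ℕ :=
  sInf {n : ℕ | ∃ l : List A_L,
    l.length = n ∧ (∀ x ∈ l, x ∈ genSet ∪ genSet⁻¹) ∧ l.prod = g}

/-! The witnesses are `wₙ = (g₁⁻ⁿ g₀ g₁ⁿ g₂)ⁿ`. The word `g₁⁻ⁿ g₀ g₁ⁿ g₂` is cyclically reduced,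
so `wₙ` has norm `n(2n + 2)`.
In `A_L`, however, `ū₂` commutes with `ū₁` and `ū₃`, so `x⁻ⁿ a xⁿ = ū₃⁻ⁿ a ū₃ⁿ`, and `ū₃` commutes
with `e`; hence `φ(wₙ) = ū₃⁻ⁿ (a e)ⁿ ū₃ⁿ` has word length at most `6n`. -/

open scoped Pointwise

theorem RAAG.commute_gen_of_adj {V : Type*} {G : SimpleGraph V} {u v : V} (h : G.Adj u v) :
    Commute (RAAG.gen G u) (RAAG.gen G v) :=
  PresentedGroup.mk_eq_mk_of_mul_inv_mem ⟨u, v, h, by group⟩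

theorem Commute.conj_mul_pow {G : Type*} [Group G] {c y a : G} (hy : Commute c y)
    (ha : Commute c a) (n : ℕ) : ((c * y) ^ n)⁻¹ * a * (c * y) ^ n = (y ^ n)⁻¹ * a * y ^ n := by
  calc ((c * y) ^ n)⁻¹ * a * (c * y) ^ n = (y ^ n)⁻¹ * ((c ^ n)⁻¹ * a * c ^ n) * y ^ n := by
        rw [hy.mul_pow]; group
    _ = (y ^ n)⁻¹ * a * y ^ n := by rw [(ha.pow_left n).inv_mul_cancel]

namespace FreeGroup

theorem norm_pow_of_isCyclicallyReduced {α : Type*} [DecidableEq α] {x : FreeGroup α}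
    (hx : IsCyclicallyReduced x.toWord) (n : ℕ) : norm (x ^ n) = n * norm x := by
  rw [norm, toWord_pow, (hx.flatten_replicate n).isReduced.reduce_eq, List.length_flatten,
    List.map_replicate, List.sum_replicate, smul_eq_mul, norm]

end FreeGroup

local notation "ū" => RAAG.gen L

theorem commute_gen_castSucc_succ (i : Fin 3) : Commute (ū i.castSucc) (ū i.succ) :=
  RAAG.commute_gen_of_adj (by simp [SimpleGraph.pathGraph_adj])

theorem gen_mem_genSet (i : Fin 4) : ū i ∈ genSet := by
  fin_cases i <;> simp [genSet]

theorem wordLength_le_of_mem_pow {g : A_L} {n : ℕ} (hg : g ∈ (genSet ∪ genSet⁻¹) ^ n) :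
    wordLength g ≤ n := by
  obtain ⟨f, rfl⟩ := Set.mem_pow.mp hg
  refine Nat.sInf_le ⟨_, List.length_ofFn, ?_, rfl⟩
  simp only [List.mem_ofFn]
  rintro _ ⟨i, rfl⟩
  exact (f i).2

def blockWord (n : ℕ) : List (Fin 3 × Bool) :=
  List.replicate n (1, false) ++ [(0, true)] ++ List.replicate n (1, true) ++ [(2, true)]

def block (n : ℕ) : FreeGroup (Fin 3) :=
  (FreeGroup.of 1 ^ n)⁻¹ * FreeGroup.of 0 * FreeGroup.of 1 ^ n * FreeGroup.of 2

theorem mk_blockWord (n : ℕ) : FreeGroup.mk (blockWord n) = block n := by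
  simp [blockWord, block, FreeGroup.mul_mk, FreeGroup.of, FreeGroup.inv_mk, FreeGroup.pow_mk,
    FreeGroup.invRev]

theorem isCyclicallyReduced_blockWord (n : ℕ) : FreeGroup.IsCyclicallyReduced (blockWord n) := by
  rw [blockWord, FreeGroup.isCyclicallyReduced_iff]
  rcases n with _ | n
  · simp [FreeGroup.IsReduced]
  · constructor
    · simp [FreeGroup.IsReduced, List.isChain_append, List.isChain_cons, List.head?_append,
        List.head?_replicate, List.getLast?_replicate, List.isChain_replicate_of_rel]
    · simp [List.getLast?_cons, List.head?_append, List.head?_replicate]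

theorem norm_block_pow (n : ℕ) : FreeGroup.norm (block n ^ n) = n * (2 * n + 2) := by
  have hword : (block n).toWord = blockWord n := by
    rw [← mk_blockWord, FreeGroup.toWord_mk, (isCyclicallyReduced_blockWord n).isReduced.reduce_eq]
  rw [FreeGroup.norm_pow_of_isCyclicallyReduced (hword ▸ isCyclicallyReduced_blockWord n),
    FreeGroup.norm, hword, blockWord]
  simp only [List.length_append, List.length_replicate, List.length_singleton]
  ring

theorem phi_block (n : ℕ) : phi (block n) = (ū 2 ^ n)⁻¹ * (elt_a * elt_e) * ū 2 ^ n := by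
  have hx : Commute (ū 1)⁻¹ (ū 2) := (commute_gen_castSucc_succ 1).inv_left
  have ha : Commute (ū 1)⁻¹ elt_a :=
    (Commute.refl _).mul_right (commute_gen_castSucc_succ 0).symm.inv_left
  have he : Commute (ū 2 ^ n) elt_e :=
    ((Commute.refl _).inv_right.mul_right (commute_gen_castSucc_succ 2)).pow_left n
  simp only [block, phi, map_mul, map_inv, map_pow, FreeGroup.lift_apply_of, Matrix.cons_val_zero,
    Matrix.cons_val_one, Matrix.cons_val_two, Matrix.tail_cons, Matrix.head_cons]
  rw [show elt_x = (ū 1)⁻¹ * ū 2 from rfl, hx.conj_mul_pow ha]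
  simp only [mul_assoc, he.eq]

theorem phi_block_pow (n : ℕ) :
    phi (block n ^ n) = (ū 2 ^ n)⁻¹ * (elt_a * elt_e) ^ n * ū 2 ^ n := by
  simpa [phi_block] using conj_pow (a := (ū 2 ^ n)⁻¹) (b := elt_a * elt_e) (i := n)

theorem wordLength_phi_block_pow_le (n : ℕ) : wordLength (phi (block n ^ n)) ≤ 6 * n := by
  set T := genSet ∪ genSet⁻¹
  have hgen (i : Fin 4) : ū i ∈ T := Or.inl (gen_mem_genSet i)
  have hinv (i : Fin 4) : (ū i)⁻¹ ∈ T := Or.inr (Set.inv_mem_inv.mpr (gen_mem_genSet i))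
  have hae : elt_a * elt_e ∈ T ^ 4 := by
    rw [show elt_a * elt_e = (ū 1)⁻¹ * ū 0 * (ū 2)⁻¹ * ū 3 by simp [elt_a, elt_e, mul_assoc],
      pow_succ, pow_succ, pow_succ, pow_one]
    exact Set.mul_mem_mul (Set.mul_mem_mul (Set.mul_mem_mul (hinv 1) (hgen 0)) (hinv 2)) (hgen 3)
  apply wordLength_le_of_mem_pow
  rw [phi_block_pow, show 6 * n = n + 4 * n + n by ring, pow_add, pow_add, pow_mul, ← inv_pow]
  exact Set.mul_mem_mul (Set.mul_mem_mul (Set.pow_mem_pow (hinv 2)) (Set.pow_mem_pow hae))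
    (Set.pow_mem_pow (hgen 2))

theorem stmt_9 :
    ¬ ∃ C : ℝ, ∀ w : FreeGroup (Fin 3),
      (FreeGroup.norm w : ℝ) ≤ C * (wordLength (phi w) : ℝ) + C := by
  rintro ⟨C, hC⟩
  obtain ⟨n, hn⟩ := exists_nat_gt (3 * |C|)
  have hbound := hC (block n ^ n)
  rw [norm_block_pow] at hbound
  have hlength : C * (wordLength (phi (block n ^ n)) : ℝ) ≤ |C| * (6 * n) :=
    calc C * (wordLength (phi (block n ^ n)) : ℝ)
        ≤ |C| * (wordLength (phi (block n ^ n)) : ℝ) :=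
          mul_le_mul_of_nonneg_right (le_abs_self C) (Nat.cast_nonneg _)
      _ ≤ |C| * (6 * n) :=
          mul_le_mul_of_nonneg_left (by exact_mod_cast wordLength_phi_block_pow_le n) (abs_nonneg C)
  push_cast at hbound
  nlinarith [le_abs_self C, abs_nonneg C]
end
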